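/- There is no separately continuous function f : [0,1] × [0,1] → ℝ whose restriction to E = E₁ ∪ E₂ equals g, where E₁ = {((2k−1)/2ⁿ, (2k−1)/2ⁿ + 1/2^{n+1}) : k = 1,…,2^{n−1}, n ∈ ℕ}, E₂ = {(x,x) : x ∈ [0,1]}, g = 1 on E₁ and g = 0 on E₂. -/
import Mathlib
open Set

def E1 : Set (ℝ × ℝ) :=
  {p | ∃ n k : ℕ, 1 ≤ n ∧ 1 ≤ k ∧ k ≤ 2 ^ (n - 1) ∧
    p.1 = (2 * (k : ℝ) - 1) / 2 ^ n ∧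
    p.2 = (2 * (k : ℝ) - 1) / 2 ^ n + 1 / 2 ^ (n + 1)}

def E2 : Set (ℝ × ℝ) := {p | p.1 ∈ Icc (0:ℝ) 1 ∧ p.2 = p.1}

set_option maxHeartbeats 1000000 in
theorem stmt17 :
    ¬ ∃ f : Icc (0:ℝ) 1 × Icc (0:ℝ) 1 → ℝ,
      (∀ x : Icc (0:ℝ) 1, Continuous fun y => f (x, y)) ∧
      (∀ y : Icc (0:ℝ) 1, Continuous fun x => f (x, y)) ∧
      (∀ p : Icc (0:ℝ) 1 × Icc (0:ℝ) 1, ((p.1 : ℝ), (p.2 : ℝ)) ∈ E1 → f p = 1) ∧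
      (∀ p : Icc (0:ℝ) 1 × Icc (0:ℝ) 1, ((p.1 : ℝ), (p.2 : ℝ)) ∈ E2 → f p = 0) := by
  rintro ⟨f, hcy, hcx, h1, h0⟩
  obtain ⟨A, hA⟩ : ∃ A : ℕ → Set (Icc (0:ℝ) 1), A = fun m : ℕ =>
      {x : Icc (0:ℝ) 1 | ∀ y : Icc (0:ℝ) 1, |(y:ℝ) - (x:ℝ)| < 1/((m:ℝ)+1) → |f (x, y)| ≤ 1/2} := ⟨_, rfl⟩
  have hclosed : ∀ m, IsClosed (A m) := by
    intro m
    rw [← isOpen_compl_iff, isOpen_iff_mem_nhds]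
    intro x hx
    simp only [hA, mem_compl_iff, mem_setOf_eq, not_forall, not_le] at hx
    obtain ⟨y, hy1, hy2⟩ := hx
    have hU : IsOpen {x' : Icc (0:ℝ) 1 | |(y:ℝ) - (x':ℝ)| < 1/(m+1) ∧ 1/2 < |f (x', y)|} := by
      apply IsOpen.inter
      · exact isOpen_lt ((continuous_const.sub continuous_subtype_val).abs) continuous_const
      · exact isOpen_lt continuous_const ((hcx y).abs)
    refine Filter.mem_of_superset (hU.mem_nhds ⟨hy1, hy2⟩) ?_
    intro x' hx'
    simp only [hA, mem_compl_iff, mem_setOf_eq, not_forall, not_le]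
    exact ⟨y, hx'.1, hx'.2⟩
  have hcover : ⋃ m, A m = univ := by
    ext x
    simp only [mem_iUnion, mem_univ, iff_true]
    have h0x : f (x, x) = 0 := h0 (x, x) ⟨x.2, rfl⟩
    obtain ⟨δ, hδ, hball⟩ := Metric.continuous_iff.mp (hcy x) x (1/2) (by norm_num)
    obtain ⟨m, hm⟩ := exists_nat_gt (1/δ)
    refine ⟨m, ?_⟩
    rw [hA]
    intro y hy
    have hdy : dist y x < δ := by
      rw [Subtype.dist_eq, Real.dist_eq]
      refine lt_of_lt_of_le hy ?_
      rw [div_le_iff₀ (by positivity)]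
      rw [div_lt_iff₀ hδ] at hm
      nlinarith [Nat.cast_nonneg (α := ℝ) m]
    have := hball y hdy
    rw [h0x, Real.dist_eq, sub_zero] at this
    linarith
  obtain ⟨m, x₀, hx₀⟩ := nonempty_interior_of_iUnion_of_closed hclosed hcover
  rw [mem_interior_iff_mem_nhds, Metric.mem_nhds_iff] at hx₀
  obtain ⟨r, hr, hball⟩ := hx₀
  obtain ⟨N, hN⟩ := pow_unbounded_of_one_lt (max (2/r) (m+1) : ℝ) one_lt_two
  have h2N : (0:ℝ) < 2 ^ N := by positivity
  have hNr : 2 / r < 2 ^ N := lt_of_le_of_lt (le_max_left _ _) hN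
  have hNm : (m:ℝ) + 1 < 2 ^ N := lt_of_le_of_lt (le_max_right _ _) hN
  obtain ⟨hx₀0, hx₀1⟩ : (0:ℝ) ≤ (x₀:ℝ) ∧ (x₀:ℝ) ≤ 1 := x₀.2
  obtain ⟨k, hk⟩ : ∃ k : ℕ, k = min (⌊(x₀:ℝ) * 2 ^ N⌋₊ + 1) (2 ^ N) := ⟨_, rfl⟩
  have hk1 : 1 ≤ k := hk ▸ le_min (Nat.succ_le_succ (Nat.zero_le _)) Nat.one_le_two_pow
  have hk2 : k ≤ 2 ^ N := hk ▸ min_le_right _ _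
  have hkR : (1:ℝ) ≤ (k:ℝ) := by exact_mod_cast hk1
  have hkR2 : (k:ℝ) ≤ 2 ^ N := by exact_mod_cast hk2
  obtain ⟨x, hxdef⟩ : ∃ x : ℝ, x = (2 * (k:ℝ) - 1) / 2 ^ (N + 1) := ⟨_, rfl⟩
  have h2N1 : (2:ℝ) ^ (N+1) = 2 * 2 ^ N := by ring
  have h2N1pos : (0:ℝ) < 2 ^ (N+1) := by positivity
  have hx0 : 0 ≤ x := by
    rw [hxdef]
    apply div_nonneg _ h2N1pos.le
    linarith
  have hx1 : x ≤ 1 - 1 / 2 ^ (N + 1) := by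
    rw [hxdef]
    have : (1:ℝ) - 1 / 2 ^ (N+1) = (2 ^ (N+1) - 1) / 2 ^ (N+1) := by
      field_simp
    rw [this, div_le_div_iff₀ h2N1pos h2N1pos]
    nlinarith
  -- key numerator bound
  have key : |(2 * (k:ℝ) - 1) - (x₀:ℝ) * 2 ^ (N+1)| ≤ 1 := by
    have hmul : (x₀:ℝ) * 2 ^ (N+1) = 2 * ((x₀:ℝ) * 2 ^ N) := by ring
    by_cases hc : ⌊(x₀:ℝ) * 2 ^ N⌋₊ + 1 ≤ 2 ^ N
    · have hkval : k = ⌊(x₀:ℝ) * 2 ^ N⌋₊ + 1 := hk.trans (min_eq_left hc)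
      have hfl : (⌊(x₀:ℝ) * 2 ^ N⌋₊ : ℝ) ≤ (x₀:ℝ) * 2 ^ N := Nat.floor_le (by positivity)
      have hfu : (x₀:ℝ) * 2 ^ N < (⌊(x₀:ℝ) * 2 ^ N⌋₊ : ℝ) + 1 := Nat.lt_floor_add_one _
      have hkcast : (k:ℝ) = (⌊(x₀:ℝ) * 2 ^ N⌋₊ : ℝ) + 1 := by rw [hkval]; push_cast; ring
      rw [abs_le]
      constructor <;> [skip; skip] <;> rw [hmul, hkcast] <;> linarith
    · push_neg at hc
      have hfl : (2:ℝ)^N ≤ (⌊(x₀:ℝ) * 2 ^ N⌋₊ : ℝ) := by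
        exact_mod_cast Nat.le_of_lt_succ hc
      have hfle : (⌊(x₀:ℝ) * 2 ^ N⌋₊ : ℝ) ≤ (x₀:ℝ) * 2 ^ N := Nat.floor_le (by positivity)
      have hx₀eq : (x₀:ℝ) = 1 := le_antisymm hx₀1 (by nlinarith)
      have hkcast : (k:ℝ) = 2 ^ N := by
        have : k = 2 ^ N := hk.trans (min_eq_right hc.le)
        rw [this]; push_cast; ring
      rw [hkcast, hmul, hx₀eq]
      rw [abs_le]
      constructor <;> nlinarith
  have hclose : |x - (x₀:ℝ)| ≤ 1 / 2 ^ (N + 1) := by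
    have heq : x - (x₀:ℝ) = ((2 * (k:ℝ) - 1) - (x₀:ℝ) * 2 ^ (N+1)) / 2 ^ (N+1) := by
      rw [hxdef]; field_simp
    rw [heq, abs_div, abs_of_pos h2N1pos]
    gcongr
  have hxI : x ∈ Icc (0:ℝ) 1 := ⟨hx0, by
    have : (0:ℝ) < 1 / 2 ^ (N+1) := by positivity
    linarith⟩
  obtain ⟨y, hydef⟩ : ∃ y : ℝ, y = x + 1 / 2 ^ (N + 2) := ⟨_, rfl⟩
  have h2N2pos : (0:ℝ) < 2 ^ (N+2) := by positivity
  have h12 : (1:ℝ) / 2 ^ (N+2) ≤ 1 / 2 ^ (N+1) := by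
    apply div_le_div_of_nonneg_left one_pos.le h2N1pos
    apply pow_le_pow_right₀ one_le_two (by omega)
  have hyI : y ∈ Icc (0:ℝ) 1 := by
    constructor
    · have : (0:ℝ) < 1 / 2 ^ (N+2) := by positivity
      rw [hydef]; linarith
    · rw [hydef]; linarith
  have hxA : (⟨x, hxI⟩ : Icc (0:ℝ) 1) ∈ A m := by
    apply hball
    rw [Metric.mem_ball, Subtype.dist_eq, Real.dist_eq]
    refine lt_of_le_of_lt hclose ?_
    rw [div_lt_iff₀ h2N1pos]
    rw [div_lt_iff₀ hr] at hNr
    nlinarith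
  rw [hA] at hxA
  have hle := hxA ⟨y, hyI⟩ (by
    show |y - x| < 1/(m+1)
    rw [hydef, add_sub_cancel_left, abs_of_pos (by positivity)]
    rw [div_lt_div_iff₀ h2N2pos (by positivity)]
    have : (2:ℝ)^(N+2) = 4 * 2^N := by ring
    nlinarith)
  have heq : f (⟨x, hxI⟩, ⟨y, hyI⟩) = 1 := by
    apply h1
    refine ⟨N + 1, k, by omega, hk1, by simpa using hk2, by simpa using hxdef, ?_⟩
    show y = (2 * (k:ℝ) - 1) / 2 ^ (N+1) + 1 / 2 ^ ((N+1) + 1)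
    rw [hydef, hxdef]
  rw [heq] at hle
  norm_num at hle
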